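/- arXiv:1510.06984 — 2 statements merged into one kernel-verified Lean document; each statement's English description precedes it below -/
import Mathlib

section
/- The left-greedy bracketings of distinct Lyndon-Shirshov words over a totally ordered alphabet are linearly independent elements of the free Lie algebra (over a field of characteristic zero, e.g. ℚ) on that alphabet. -/
open scoped Classical

/-- A word `w` over a totally ordered alphabet is a Lyndon-Shirshov word if it is nonempty and
lexicographically strictly less than every word obtained from it by a nontrivial cyclic
permutation (moving a nonempty proper prefix to the end). -/
def IsLyndon {A : Type*} [LinearOrder A] (w : List A) : Prop :=
  w ≠ [] ∧ ∀ u v : List A, u ≠ [] → v ≠ [] → w = u ++ v → w < v ++ u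

/-- Lie bracket expressions in letters from `A`: the free magma on `A`. -/
inductive LieExpr (A : Type*) : Type _
  | of : A → LieExpr A
  | br : LieExpr A → LieExpr A → LieExpr A

namespace LieExpr

variable {A : Type*}

/-- The list of letters of a Lie bracket expression (its positions, read left to right). -/
def letters : LieExpr A → List A
  | of a => [a]
  | br h k => h.letters ++ k.letters

/-- The number of positions of a Lie bracket expression. -/
def size : LieExpr A → ℕ
  | of _ => 1
  | br h k => h.size + k.size

/-- For each sub-bracket `[H,K]` of the expression (placed at offset `i`), the pair of
position intervals (recorded as `(start, length)`) occupied by `H` and by `K`. -/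
def intervals : LieExpr A → ℕ → List ((ℕ × ℕ) × (ℕ × ℕ))
  | of _, _ => []
  | br h k, i =>
      ((i, h.size), (i + h.size, k.size)) :: (h.intervals i ++ k.intervals (i + h.size))

/-- `iterBr L n K = [L,[L,…,[L,K]…]]` with `n` copies of `L`. -/
def iterBr (L : LieExpr A) : ℕ → LieExpr A → LieExpr A
  | 0, K => K
  | n + 1, K => br L (iterBr L n K)

end LieExpr

/-- A finite directed graph with vertices labeled by letters from `A`. -/
structure LGraph (A : Type*) where
  V : Type
  [instFintype : Fintype V]
  [instDecEq : DecidableEq V]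
  edges : Finset (V × V)
  label : V → A

attribute [instance] LGraph.instFintype LGraph.instDecEq

namespace LGraph

variable {A : Type*}

/-- The full subgraph of `G` on the vertex set `S` is connected: `S` is nonempty and any two
vertices of `S` are joined by a path of edges of `G` lying inside `S` (ignoring directions). -/
def ConnOn (G : LGraph A) (S : Finset G.V) : Prop :=
  S.Nonempty ∧ ∀ x ∈ S, ∀ y ∈ S,
    Relation.ReflTransGen (fun u v => u ∈ S ∧ v ∈ S ∧ ((u, v) ∈ G.edges ∨ (v, u) ∈ G.edges)) x y

/-- The edges of `G` joining the vertex sets `S` and `T` (in either direction). -/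
def between (G : LGraph A) (S T : Finset G.V) : Finset (G.V × G.V) :=
  G.edges.filter fun e => (e.1 ∈ S ∧ e.2 ∈ T) ∨ (e.1 ∈ T ∧ e.2 ∈ S)

end LGraph

section Pairing

variable {A : Type*}

/-- The set of vertices sent by `σ` to positions in the interval `[st, st + len)`. -/
def posSet (G : LGraph A) {m : ℕ} (σ : G.V ≃ Fin m) (st len : ℕ) : Finset G.V :=
  Finset.univ.filter fun v => st ≤ (σ v : ℕ) ∧ (σ v : ℕ) < st + len

/-- The condition for the `σ`-configuration pairing to be nonzero: for every sub-bracket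
`[H,K]` of `L`, the full subgraphs of `G` on `σ⁻¹H` and on `σ⁻¹K` are both connected and
there is exactly one edge of `G` between them. -/
def Good (G : LGraph A) (L : LieExpr A) (σ : G.V ≃ Fin L.letters.length) : Prop :=
  ∀ q ∈ L.intervals 0,
    G.ConnOn (posSet G σ q.1.1 q.1.2) ∧ G.ConnOn (posSet G σ q.2.1 q.2.2) ∧
      (G.between (posSet G σ q.1.1 q.1.2) (posSet G σ q.2.1 q.2.2)).card = 1

/-- The `σ`-configuration pairing `⟨G, L⟩_σ`: zero unless `σ` is good, and otherwise `(-1)ⁿ`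
where `n` is the number of edges of `G` pointing (under `σ`) from right to left in `L`. -/
noncomputable def pairingAt (G : LGraph A) (L : LieExpr A)
    (σ : G.V ≃ Fin L.letters.length) : ℤ :=
  if Good G L σ then
    (-1 : ℤ) ^ (G.edges.filter fun e => (σ e.2 : ℕ) < (σ e.1 : ℕ)).card
  else 0

/-- The finite set of label-preserving bijections from the vertices of `G` to the
positions of `L`. -/
noncomputable def Bijections (G : LGraph A) (L : LieExpr A) :
    Finset (G.V ≃ Fin L.letters.length) :=
  Finset.univ.filter fun σ => ∀ v, G.label v = L.letters.get (σ v)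

/-- The configuration pairing `⟨G, L⟩`: the sum of `⟨G, L⟩_σ` over all label-preserving
bijections `σ`. -/
noncomputable def pairing (G : LGraph A) (L : LieExpr A) : ℤ :=
  ∑ σ ∈ Bijections G L, pairingAt G L σ

end Pairing

/-- Trees recording the nested structure of a fully partitioned word: a fully partitioned
word is either a single letter or `αⁿχ` (`n ≥ 1`) where `α` and `χ` are fully partitioned. -/
inductive FP (A : Type*) : Type _
  | letter : A → FP A
  | node : FP A → ℕ → FP A → FP A

namespace FP

variable {A : Type*}

/-- The underlying word of a fully-partitioned-word tree. -/
def word : FP A → List A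
  | letter x => [x]
  | node α n χ => (List.replicate n α.word).flatten ++ χ.word

/-- `IsBlock b t`: `t` is (the tree of) a valid block of the level for which `b` is the base
(i.e. `b` is the first block of the previous level): either `t = bʲu` with `j ≥ 1` and `u` a
block of the previous level, `u ≠ b`; or (collapsed case, `j = 0`) `t` is itself a block of
the previous level different from `b`. -/
def IsBlock : FP A → FP A → Prop
  | letter a, t =>
      (∃ j x, 1 ≤ j ∧ t = node (letter a) j (letter x) ∧ x ≠ a) ∨
      (∃ x, t = letter x ∧ x ≠ a)
  | node c m v, t =>
      (∃ j u, 1 ≤ j ∧ t = node (node c m v) j u ∧ IsBlock c u ∧ u ≠ node c m v) ∨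
      (IsBlock c t ∧ t ≠ node c m v)

/-- `IsBlockUnder b u` : `u` is a block of the level of `b` itself (a single letter when `b`
is a letter, and a block over the base of `b` otherwise). -/
def IsBlockUnder : FP A → FP A → Prop
  | letter _, u => ∃ x, u = letter x
  | node c _ _, u => IsBlock c u

/-- `t.Valid`: `t` is the tree of nested simple partitions of a word which fully partitions:
each node is `αⁿχ` with `n ≥ 1`, where `α` (the base, i.e. the first block of its level) is
itself valid, and `χ` is a block of the same level as `α` with `χ ≠ α`. -/
def Valid : FP A → Prop
  | letter _ => True
  | node c m v => Valid c ∧ 1 ≤ m ∧ IsBlockUnder c v ∧ v ≠ c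

/-- The left-greedy bracketing `⌊w⌋` of a fully partitioned word:
`⌊x⌋ = x`, and `⌊αⁿχ⌋ = [⌊α⌋,[⌊α⌋,…,[⌊α⌋,⌊χ⌋]…]]`. -/
def bracket : FP A → LieExpr A
  | letter x => .of x
  | node α n χ => LieExpr.iterBr α.bracket n χ.bracket

end FP

/-- A finite directed labeled graph with a distinguished anchor vertex. -/
structure AGraph (A : Type*) extends LGraph A where
  anchor : V

namespace FP

variable {A : Type*}

/-- The star graph `★(w)` of a fully partitioned word: `★(x)` is a single anchor vertex
labeled `x`; `★(αⁿχ)` consists of `n` disjoint copies of `★(α)` and one copy of `★(χ)`,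
with an edge from the anchor of each copy of `★(α)` to the anchor of `★(χ)`, which is the
anchor of the whole graph. -/
def star : FP A → AGraph A
  | letter x => { V := PUnit, edges := ∅, label := fun _ => x, anchor := PUnit.unit }
  | node α n χ =>
      let Gα := star α
      let Gχ := star χ
      { V := (Fin n × Gα.V) ⊕ Gχ.V
        edges :=
          ((Finset.univ ×ˢ Gα.edges).image fun p =>
              (Sum.inl (p.1, p.2.1), Sum.inl (p.1, p.2.2))) ∪
          (Gχ.edges.image fun e => (Sum.inr e.1, Sum.inr e.2)) ∪
          (Finset.univ.image fun k : Fin n => (Sum.inl (k, Gα.anchor), Sum.inr Gχ.anchor))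
        label := Sum.elim (fun p => Gα.label p.2) Gχ.label
        anchor := Sum.inr Gχ.anchor }

end FP

/-- Interpretation of a Lie bracket expression in the free Lie algebra over `ℚ`. -/
noncomputable def LieExpr.toLie {A : Type*} : LieExpr A → FreeLieAlgebra ℚ A
  | .of a => FreeLieAlgebra.of ℚ a
  | .br h k => ⁅h.toLie, k.toLie⁆

/-!
Send the free Lie algebra to the free associative algebra `ℚ[FreeMonoid A]`. Call a bracketing
ascending if every sub-bracket `[H, K]` satisfies `hk < kh` for the words `h`, `k` of `H`, `K`;
then the image of an ascending bracketing of `w` is `w` plus lexicographically larger words of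
the same length. The left-greedy bracketing of a Lyndon word `w` is ascending: the blocks of each
level of the full partition form a prefix code, so the first block `c` (a prefix of `w`) and any
other block `u` (a factor of `w` at a positive position) differ at a common position, and `u`
cannot be the smaller there since `w` is Lyndon. Hence the images of the `⌊w⌋` are unitriangular
for the lexicographic order, so they are linearly independent.
-/

namespace List

variable {α β : Type*}

theorem append_lt_append_of_lt_of_not_prefix [LinearOrder α] {a b : List α} (h : a < b)
    (hp : ¬a <+: b) (x y : List α) : a ++ x < b ++ y := by
  induction a generalizing b with
  | nil => exact absurd nil_prefix hp
  | cons c a ih =>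
    cases b with
    | nil => exact absurd h (List.not_lt_nil _)
    | cons d b =>
      rcases cons_lt_cons_iff.mp h with hcd | ⟨rfl, hab⟩
      · exact cons_lt_cons_iff.mpr (Or.inl hcd)
      · exact cons_lt_cons_iff.mpr
          (Or.inr ⟨rfl, ih hab fun h' => hp (cons_prefix_cons.mpr ⟨rfl, h'⟩)⟩)

theorem append_le_append_of_length_eq [LinearOrder α] {a b x y : List α}
    (hl : a.length = b.length) (hab : a ≤ b) (hxy : x ≤ y) : a ++ x ≤ b ++ y := by
  rcases hab.lt_or_eq with hab | rfl
  · exact (append_lt_append_of_lt_of_not_prefix hab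
      (fun hp => hab.ne (hp.eq_of_length hl)) x y).le
  · rcases hxy.lt_or_eq with hxy | rfl
    · exact (append_left_lt hxy).le
    · exact le_rfl

theorem replicate_append_singleton_prefix {a x y : α} {j k : ℕ} (hx : x ≠ a) (hy : y ≠ a)
    (h : replicate j a ++ [x] <+: replicate k a ++ [y]) : j = k ∧ x = y := by
  induction j generalizing k with
  | zero =>
    cases k with
    | zero => exact ⟨rfl, by simpa using h⟩
    | succ k => exact absurd (cons_prefix_cons.mp h).1 hx
  | succ j ih =>
    cases k with
    | zero => exact absurd (cons_prefix_cons.mp h).1.symm hy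
    | succ k =>
      obtain ⟨hjk, rfl⟩ := ih (cons_prefix_cons.mp h).2
      exact ⟨congrArg _ hjk, rfl⟩

theorem prefix_of_flatMap_prefix {φ : β → List α} {P : β → Prop}
    (hcode : ∀ x y, P x → P y → φ x <+: φ y → x = y) (hne : ∀ x, P x → φ x ≠ [])
    {s t : List β} (hs : ∀ x ∈ s, P x) (ht : ∀ x ∈ t, P x)
    (h : s.flatMap φ <+: t.flatMap φ) : s <+: t := by
  induction s generalizing t with
  | nil => exact nil_prefix
  | cons x s ih =>
    cases t with
    | nil => exact absurd (prefix_nil.mp ((prefix_append _ _).trans h)) (hne x (hs x (by simp)))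
    | cons y t =>
      simp only [flatMap_cons] at h
      have hx := hs x mem_cons_self
      have hy := ht y mem_cons_self
      obtain rfl : x = y := by
        rcases prefix_or_prefix_of_prefix ((prefix_append _ _).trans h) (prefix_append _ _)
          with hxy | hyx
        · exact hcode x y hx hy hxy
        · exact (hcode y x hy hx hyx).symm
      exact cons_prefix_cons.mpr ⟨rfl, ih (fun z hz => hs z (mem_cons_of_mem _ hz))
        (fun z hz => ht z (mem_cons_of_mem _ hz)) ((prefix_append_right_inj _).mp h)⟩

theorem infix_tail_of_append_prefix {x z w : List α} (hx : x ≠ [])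
    (h : x ++ z <+: w) : z <:+: w.tail := by
  obtain ⟨t, rfl⟩ := h
  cases x with
  | nil => exact absurd rfl hx
  | cons a x => exact ⟨x, t, by simp⟩

end List

theorem linearIndependent_of_triangular {ι R M : Type*} [LinearOrder ι] [Ring R]
    [NoZeroDivisors R] [AddCommGroup M] [Module R M] {v : ι → M} (φ : ι → M →ₗ[R] R)
    (hdiag : ∀ i, φ i (v i) ≠ 0) (htri : ∀ i j, i < j → φ i (v j) = 0) :
    LinearIndependent R v := by
  classical
  rw [linearIndependent_iff']
  intro s g hg i hi
  by_contra hgi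
  obtain ⟨j, hj, hmin⟩ := (s.filter (g · ≠ 0)).exists_min_image id ⟨i, by simp [hi, hgi]⟩
  rw [Finset.mem_filter] at hj
  have hφ : φ j (∑ k ∈ s, g k • v k) = g j * φ j (v j) := by
    rw [map_sum, Finset.sum_eq_single j]
    · simp
    · intro k hk hkj
      rcases lt_or_gt_of_ne hkj with hlt | hgt
      · have hgk : g k = 0 := by
          by_contra hgk
          exact absurd (hmin k (Finset.mem_filter.mpr ⟨hk, hgk⟩)) (not_le.mpr hlt)
        simp [hgk]
      · rw [map_smul, htri j k hgt, smul_zero]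
    · exact fun hjs => absurd hj.1 hjs
  rw [hg, map_zero] at hφ
  exact mul_ne_zero hj.2 (hdiag j) hφ.symm

section Lyndon

variable {A : Type*} [LinearOrder A]

theorem IsLyndon.exists_lt_append {w u : List A} (hw : IsLyndon w) (hu : u ≠ [])
    (h : u <:+: w.tail) : ∃ s, w < u ++ s := by
  obtain ⟨p, q, hpq⟩ := h
  cases w with
  | nil => exact absurd rfl hw.1
  | cons a t =>
    rw [List.tail_cons] at hpq
    subst hpq
    refine ⟨q ++ a :: p, ?_⟩
    simpa using hw.2 (a :: p) (u ++ q) (List.cons_ne_nil _ _) (by simp [hu]) (by simp)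

theorem IsLyndon.append_lt_append_of_prefix_of_infix_tail {w a b : List A} (hw : IsLyndon w)
    (ha : a <+: w) (hb : b <:+: w.tail) (hab : ¬a <+: b) (hba : ¬b <+: a) (x y : List A) :
    a ++ x < b ++ y := by
  rcases lt_trichotomy a b with h | rfl | h
  · exact List.append_lt_append_of_lt_of_not_prefix h hab x y
  · exact absurd (List.prefix_refl a) hab
  · obtain ⟨s, hs⟩ := hw.exists_lt_append (fun hb0 => hba (by simp [hb0])) hb
    obtain ⟨t, rfl⟩ := ha
    exact absurd (List.append_lt_append_of_lt_of_not_prefix h hba s t) (not_lt.mpr hs.le)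

end Lyndon

namespace LieExpr

variable {A : Type*}

theorem letters_iterBr (L K : LieExpr A) (n : ℕ) :
    (iterBr L n K).letters = (List.replicate n L.letters).flatten ++ K.letters := by
  induction n with
  | zero => rfl
  | succ n ih => simp [iterBr, letters, ih, List.replicate_succ]

variable [LinearOrder A]

def Ascending : LieExpr A → Prop
  | of _ => True
  | br h k => h.Ascending ∧ k.Ascending ∧ h.letters ++ k.letters < k.letters ++ h.letters

theorem Ascending.iterBr {L K : LieExpr A} (hL : L.Ascending) (hK : K.Ascending)
    (hLK : L.letters ++ K.letters < K.letters ++ L.letters) (n : ℕ) :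
    (L.iterBr n K).Ascending := by
  suffices ∀ n, (L.iterBr n K).Ascending ∧
      L.letters ++ (L.iterBr n K).letters < (L.iterBr n K).letters ++ L.letters from (this n).1
  intro n
  induction n with
  | zero => exact ⟨hK, hLK⟩
  | succ n ih =>
    refine ⟨⟨hL, ih⟩, ?_⟩
    simpa [LieExpr.iterBr, letters] using List.append_left_lt ih.2

end LieExpr

namespace FP

variable {A : Type*}

theorem word_ne_nil : ∀ t : FP A, t.word ≠ []
  | letter _ => by simp [word]
  | node _ _ χ => by simpa [word] using fun _ => word_ne_nil χ

/-- The block `cʲu` of the level above `c`; for `j = 0` this is `u` itself. -/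
def simple (c : FP A) : ℕ → FP A → FP A
  | 0, u => u
  | j + 1, u => node c (j + 1) u

theorem word_simple (c : FP A) (j : ℕ) (u : FP A) :
    (simple c j u).word = (List.replicate j c ++ [u]).flatMap word := by
  cases j <;> simp [simple, word, List.flatMap_replicate]

theorem simple_of_one_le {c : FP A} {j : ℕ} (hj : 1 ≤ j) (u : FP A) :
    simple c j u = node c j u := by
  obtain ⟨j, rfl⟩ := Nat.exists_eq_add_of_le' hj
  rfl

theorem isBlock_iff {c B : FP A} :
    IsBlock c B ↔ ∃ j u, IsBlockUnder c u ∧ u ≠ c ∧ B = simple c j u := by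
  cases c with
  | letter a =>
    constructor
    · rintro (⟨j, x, hj, rfl, hx⟩ | ⟨x, rfl, hx⟩)
      · exact ⟨j, letter x, ⟨x, rfl⟩, by simpa using hx, (simple_of_one_le hj _).symm⟩
      · exact ⟨0, letter x, ⟨x, rfl⟩, by simpa using hx, rfl⟩
    · rintro ⟨_ | j, _, ⟨x, rfl⟩, hx, rfl⟩
      · exact Or.inr ⟨x, rfl, by simpa using hx⟩
      · exact Or.inl ⟨j + 1, x, by omega, rfl, by simpa using hx⟩
  | node c m v =>
    constructor
    · rintro (⟨j, u, hj, rfl, hu, hne⟩ | ⟨hB, hne⟩)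
      · exact ⟨j, u, hu, hne, (simple_of_one_le hj _).symm⟩
      · exact ⟨0, B, hB, hne, rfl⟩
    · rintro ⟨_ | j, u, hu, hne, rfl⟩
      · exact Or.inr ⟨hu, hne⟩
      · exact Or.inl ⟨j + 1, u, by omega, rfl, hu, hne⟩

theorem isBlockUnder_self : ∀ {c : FP A}, c.Valid → IsBlockUnder c c
  | letter a, _ => ⟨a, rfl⟩
  | node _ m v, ⟨_, hm, hv, hne⟩ =>
    isBlock_iff.mpr ⟨m, v, hv, hne, (simple_of_one_le hm v).symm⟩

def PrefixFree (P : FP A → Prop) : Prop :=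
  ∀ X Y, P X → P Y → X.word <+: Y.word → X = Y

theorem PrefixFree.isBlock {c : FP A} (hU : PrefixFree (IsBlockUnder c))
    (hc : IsBlockUnder c c) : PrefixFree (IsBlock c) := by
  have hseq : ∀ j u, IsBlockUnder c u → ∀ x ∈ List.replicate j c ++ [u], IsBlockUnder c x := by
    intro j u hu x hx
    rcases List.mem_append.mp hx with hx | hx
    · rwa [List.eq_of_mem_replicate hx]
    · rwa [List.mem_singleton.mp hx]
  intro X Y hX hY h
  obtain ⟨j, u, hu, huc, rfl⟩ := isBlock_iff.mp hX
  obtain ⟨k, u', hu', hu'c, rfl⟩ := isBlock_iff.mp hY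
  rw [word_simple, word_simple] at h
  obtain ⟨rfl, rfl⟩ := List.replicate_append_singleton_prefix huc hu'c
    (List.prefix_of_flatMap_prefix hU (fun x _ => word_ne_nil x) (hseq j u hu) (hseq k u' hu') h)
  rfl

theorem prefixFree_isBlockUnder : ∀ {c : FP A}, c.Valid → PrefixFree (IsBlockUnder c)
  | letter _, _ => by
    rintro _ _ ⟨x, rfl⟩ ⟨y, rfl⟩ h
    rw [(List.cons_prefix_cons.mp h).1]
  | node _ _ _, hc => (prefixFree_isBlockUnder hc.1).isBlock (isBlockUnder_self hc.1)

theorem letters_bracket : ∀ t : FP A, t.bracket.letters = t.word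
  | letter _ => rfl
  | node α n χ => by
    simp [bracket, word, LieExpr.letters_iterBr, letters_bracket α, letters_bracket χ]

variable [LinearOrder A]

theorem ascending_bracket_node {c u : FP A} (hc : c.bracket.Ascending)
    (hu : u.bracket.Ascending) (hcu : c.word ++ u.word < u.word ++ c.word) (j : ℕ) :
    (node c j u).bracket.Ascending :=
  hc.iterBr hu (by rwa [letters_bracket, letters_bracket]) j

theorem ascending_bracket_of_prefix {w : List A} (hw : IsLyndon w) :
    ∀ {b : FP A}, b.Valid → b.word <+: w →
      b.bracket.Ascending ∧ ∀ B, IsBlockUnder b B → B.word <:+: w.tail → B.bracket.Ascending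
  | letter _, _, _ => ⟨trivial, by rintro _ ⟨x, rfl⟩ _; trivial⟩
  | node c m v, ⟨hc, hm, hv, hvc⟩, hbw => by
    obtain ⟨m, rfl⟩ := Nat.exists_eq_add_of_le' hm
    have hword : (node c (m + 1) v).word = c.word ++ (node c m v).word := by
      simp [word, List.replicate_succ]
    rw [hword] at hbw
    obtain ⟨hasc, hblocks⟩ := ascending_bracket_of_prefix hw hc ((List.prefix_append _ _).trans hbw)
    have hcode := prefixFree_isBlockUnder hc
    have hcc := isBlockUnder_self hc
    have hsimple : ∀ j u, IsBlockUnder c u → u ≠ c → u.word <:+: w.tail →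
        (simple c j u).bracket.Ascending := by
      rintro (_ | j) u hu huc huw
      · exact hblocks u hu huw
      · refine ascending_bracket_node hasc (hblocks u hu huw) ?_ _
        exact hw.append_lt_append_of_prefix_of_infix_tail ((List.prefix_append _ _).trans hbw)
          huw (fun h => huc (hcode c u hcc hu h).symm) (fun h => huc (hcode u c hu hcc h)) _ _
    refine ⟨hsimple (m + 1) v hv hvc ?_, fun B hB hBw => ?_⟩
    · exact (List.suffix_append _ _).isInfix.trans
        (List.infix_tail_of_append_prefix (word_ne_nil c) hbw)
    · obtain ⟨j, u, hu, huc, rfl⟩ := isBlock_iff.mp hB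
      exact hsimple j u hu huc ((List.suffix_append _ _).isInfix.trans
        (by rwa [word_simple, List.flatMap_append, List.flatMap_singleton] at hBw))

theorem ascending_bracket {t : FP A} (ht : t.Valid) (hw : IsLyndon t.word) :
    t.bracket.Ascending :=
  (ascending_bracket_of_prefix hw ht (List.prefix_refl _)).1

end FP

section WordExpansion

open MonoidAlgebra

variable {A R : Type*}

attribute [local instance] LieRing.ofAssociativeRing

variable (A) in
noncomputable def wordExpansion : FreeLieAlgebra ℚ A →ₗ⁅ℚ⁆ MonoidAlgebra ℚ (FreeMonoid A) :=
  FreeLieAlgebra.lift ℚ fun a => of ℚ (FreeMonoid A) (FreeMonoid.of a)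

theorem wordExpansion_toLie_br (h k : LieExpr A) :
    wordExpansion A (LieExpr.br h k).toLie =
      wordExpansion A h.toLie * wordExpansion A k.toLie -
        wordExpansion A k.toLie * wordExpansion A h.toLie := by
  rw [LieExpr.toLie, LieHom.map_lie, Ring.lie_def]

variable [LinearOrder A]

def SupportAbove [Semiring R] (x : MonoidAlgebra R (FreeMonoid A)) (w : List A) : Prop :=
  ∀ m ∈ x.coeff.support, m.toList.length = w.length ∧ w ≤ m.toList

namespace SupportAbove

theorem mono [Semiring R] {x : MonoidAlgebra R (FreeMonoid A)} {u v : List A}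
    (hx : SupportAbove x v) (hl : u.length = v.length) (huv : u ≤ v) : SupportAbove x u :=
  fun m hm => ⟨(hx m hm).1.trans hl.symm, huv.trans (hx m hm).2⟩

theorem mul [Semiring R] {x y : MonoidAlgebra R (FreeMonoid A)} {u v : List A}
    (hx : SupportAbove x u) (hy : SupportAbove y v) : SupportAbove (x * y) (u ++ v) := by
  classical
  intro m hm
  obtain ⟨p, hp, q, hq, rfl⟩ := Finset.mem_mul.mp (support_coeff_mul_subset x y hm)
  obtain ⟨hpl, hpu⟩ := hx p hp
  obtain ⟨hql, hqv⟩ := hy q hq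
  rw [FreeMonoid.toList_mul]
  exact ⟨by simp [hpl, hql], List.append_le_append_of_length_eq hpl.symm hpu hqv⟩

theorem sub [Ring R] {x y : MonoidAlgebra R (FreeMonoid A)} {w : List A}
    (hx : SupportAbove x w) (hy : SupportAbove y w) : SupportAbove (x - y) w := by
  classical
  intro m hm
  rw [coeff_sub] at hm
  exact (Finset.mem_union.mp (Finsupp.support_sub hm)).elim (hx m) (hy m)

theorem coeff_eq_zero_of_lt [Semiring R] {x : MonoidAlgebra R (FreeMonoid A)} {u w : List A}
    (hx : SupportAbove x w) (h : u < w) : x.coeff (FreeMonoid.ofList u) = 0 :=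
  Finsupp.notMem_support_iff.mp fun hm => not_lt.mpr (hx _ hm).2 h

theorem coeff_mul_append [Semiring R] {x : MonoidAlgebra R (FreeMonoid A)} {u : List A}
    (hx : SupportAbove x u) (y : MonoidAlgebra R (FreeMonoid A)) (v : List A) :
    (x * y).coeff (FreeMonoid.ofList (u ++ v)) =
      x.coeff (FreeMonoid.ofList u) * y.coeff (FreeMonoid.ofList v) := by
  rw [FreeMonoid.ofList_append]
  refine coeff_mul_mul_of_uniqueMul fun p q hp _ hpq => ?_
  have := congrArg FreeMonoid.toList hpq
  rw [FreeMonoid.toList_mul, FreeMonoid.toList_mul, FreeMonoid.toList_ofList,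
    FreeMonoid.toList_ofList] at this
  obtain ⟨hp', hq'⟩ := List.append_inj this (hx p hp).1
  exact ⟨FreeMonoid.toList.injective hp', FreeMonoid.toList.injective hq'⟩

end SupportAbove

theorem supportAbove_wordExpansion :
    ∀ {L : LieExpr A}, L.Ascending → SupportAbove (wordExpansion A L.toLie) L.letters
  | .of a, _ => by
    intro m hm
    simp only [wordExpansion, LieExpr.toLie, FreeLieAlgebra.lift_of_apply, of_apply,
      coeff_single] at hm
    obtain rfl := Finset.mem_singleton.mp (Finsupp.support_single_subset hm)
    exact ⟨rfl, le_rfl⟩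
  | .br h k, ⟨hh, hk, hhk⟩ => by
    rw [wordExpansion_toLie_br]
    have hX := supportAbove_wordExpansion hh
    have hY := supportAbove_wordExpansion hk
    exact (hX.mul hY).sub ((hY.mul hX).mono (by simp [add_comm]) hhk.le)

theorem coeff_wordExpansion_letters :
    ∀ {L : LieExpr A}, L.Ascending →
      (wordExpansion A L.toLie).coeff (FreeMonoid.ofList L.letters) = 1
  | .of a, _ => by
    simp [wordExpansion, LieExpr.toLie, LieExpr.letters]
  | .br h k, ⟨hh, hk, hhk⟩ => by
    rw [wordExpansion_toLie_br, coeff_sub, Finsupp.sub_apply, LieExpr.letters,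
      (supportAbove_wordExpansion hh).coeff_mul_append, coeff_wordExpansion_letters hh,
      coeff_wordExpansion_letters hk,
      ((supportAbove_wordExpansion hk).mul (supportAbove_wordExpansion hh)).coeff_eq_zero_of_lt hhk,
      mul_one, sub_zero]

noncomputable def wordCoeff (u : List A) : FreeLieAlgebra ℚ A →ₗ[ℚ] ℚ :=
  Finsupp.lapply (FreeMonoid.ofList u) ∘ₗ (coeffLinearEquiv ℚ).toLinearMap ∘ₗ
    (wordExpansion A).toLinearMap

theorem wordCoeff_letters_toLie {L : LieExpr A} (hL : L.Ascending) :
    wordCoeff L.letters L.toLie = 1 :=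
  coeff_wordExpansion_letters hL

theorem wordCoeff_toLie_of_lt {L : LieExpr A} (hL : L.Ascending) {u : List A}
    (hu : u < L.letters) : wordCoeff u L.toLie = 0 :=
  (supportAbove_wordExpansion hL).coeff_eq_zero_of_lt hu

end WordExpansion

/-- **The left-greedy bracketings of distinct Lyndon-Shirshov words are linearly
independent** in the free Lie algebra over `ℚ`: any family indexed by the Lyndon-Shirshov
words whose member at `w` is the left-greedy bracketing `⌊w⌋` (computed from the full
partition `t` of `w`) is linearly independent. -/
theorem leftGreedy_linearIndependent {A : Type*} [LinearOrder A]
    (f : {w : List A // IsLyndon w} → FreeLieAlgebra ℚ A)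
    (hf : ∀ w, ∃ t : FP A, t.Valid ∧ t.word = w.1 ∧ f w = t.bracket.toLie) :
    LinearIndependent ℚ f := by
  choose t hvalid hword hft using hf
  have hasc : ∀ w, (t w).bracket.Ascending := fun w =>
    FP.ascending_bracket (hvalid w) (by rw [hword]; exact w.2)
  have hletters : ∀ w, (t w).bracket.letters = w.1 := fun w =>
    (FP.letters_bracket _).trans (hword w)
  refine linearIndependent_of_triangular (fun w => wordCoeff w.1) (fun w => ?_) fun w w' hlt => ?_
  · rw [hft, ← hletters, wordCoeff_letters_toLie (hasc w)]
    exact one_ne_zero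
  · rw [hft]
    exact wordCoeff_toLie_of_lt (hasc w') (by rwa [hletters])
end

section
/- Bracketing Lie expressions is dual to cutting graphs: for a finite directed graph G with letter-labeled vertices in which every edge is separating (e.g. a tree), and Lie bracket expressions H and K, ⟨G, [H,K]⟩ = Σ_e ( ⟨G₁ᵉ, H⟩·⟨G₂ᵉ, K⟩ − ⟨G₁ᵉ, K⟩·⟨G₂ᵉ, H⟩ ), where the sum is over all edges e of G and G₁ᵉ, G₂ᵉ are the two subgraphs obtained by removing the edge e from G, ordered so that e pointed from G₁ᵉ to G₂ᵉ in G. -/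
/-!
A bijection `σ` contributes to `⟨G, [H,K]⟩` only if the positions of `H` pull back to a connected
vertex set `S` with connected complement and exactly one edge `e` between them; `S` is then the
side of `e` containing one of its endpoints. For such a cut, the bijections `σ` with
`σ⁻¹(H) = S` correspond to pairs of bijections `S → H`, `Sᶜ → K`; goodness and labels split
along this correspondence, and the sign picks up one extra factor `-1` exactly when `e` points
from the `K`-side to the `H`-side. Summing over the two sides of every edge gives the two terms.
-/

open scoped Classical

namespace LGraph

variable {A : Type*}

/-- Reachability between vertices of `G` using only the edges in `R` (ignoring directions). -/
def reach (G : LGraph A) (R : Finset (G.V × G.V)) (x y : G.V) : Prop :=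
  Relation.ReflTransGen (fun u v => (u, v) ∈ R ∨ (v, u) ∈ R) x y

/-- The full (induced) subgraph of `G` on a set `S` of vertices. -/
def induce (G : LGraph A) (S : Finset G.V) : LGraph A where
  V := {x : G.V // x ∈ S}
  edges := Finset.univ.filter fun p : {x : G.V // x ∈ S} × {x : G.V // x ∈ S} =>
    ((p.1 : G.V), (p.2 : G.V)) ∈ G.edges
  label := fun x => G.label x

/-- The set of vertices of `G` reachable from `x` after removing the edge `e`. -/
noncomputable def side (G : LGraph A) (e : G.V × G.V) (x : G.V) : Finset G.V :=
  Finset.univ.filter fun v => G.reach (G.edges.erase e) x v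

end LGraph

namespace Relation

variable {α β : Type*}

theorem ReflTransGen.symm_of_symm {r : α → α → Prop} (hr : ∀ a b, r a b → r b a)
    {a b : α} (h : ReflTransGen r a b) : ReflTransGen r b a :=
  ReflTransGen.mono (fun a b h => hr b a h) _ _ (reflTransGen_swap.2 h)

theorem reflTransGen_onFun_iff {f : α → β} (hf : Function.Injective f) {r : β → β → Prop}
    (hr : ∀ a b, r a b → a ∈ Set.range f) {x y : α} :
    ReflTransGen (fun a b => r (f a) (f b)) x y ↔ ReflTransGen r (f x) (f y) := by
  refine ⟨fun h => ReflTransGen.lift f (fun _ _ h => h) _ _ h, fun h => ?_⟩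
  suffices ∀ b, ReflTransGen r (f x) b → ∀ y, f y = b →
      ReflTransGen (fun a b => r (f a) (f b)) x y from this _ h y rfl
  intro b hb
  induction hb with
  | refl => exact fun y hy => hf hy ▸ .refl
  | tail _ hcd ih =>
    obtain ⟨z, rfl⟩ := hr _ _ hcd
    rintro y rfl
    exact (ih z rfl).tail hcd

end Relation

namespace LieExpr

variable {A : Type*}

theorem length_letters (L : LieExpr A) : L.letters.length = L.size := by
  induction L with
  | of _ => rfl
  | br _ _ ihH ihK => simp [letters, size, ihH, ihK]

theorem intervals_le (L : LieExpr A) (i : ℕ) :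
    ∀ q ∈ L.intervals i, q.1.1 + q.1.2 ≤ i + L.size ∧ q.2.1 + q.2.2 ≤ i + L.size := by
  induction L generalizing i with
  | of _ => simp [intervals]
  | br H K ihH ihK =>
    simp only [intervals, List.mem_cons, List.mem_append, size]
    rintro q (rfl | hq | hq)
    · dsimp only; omega
    · have := ihH i q hq; omega
    · have := ihK (i + H.size) q hq; omega

theorem intervals_eq_map (L : LieExpr A) (i : ℕ) :
    L.intervals i = (L.intervals 0).map fun q => ((i + q.1.1, q.1.2), (i + q.2.1, q.2.2)) := by
  induction L generalizing i with
  | of _ => rfl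
  | br H K ihH ihK =>
    simp only [intervals, Nat.zero_add, Nat.add_zero, List.map_cons, List.map_append, List.map_map,
      ihH i, ihK (i + H.size), ihK H.size, Function.comp_def, Nat.add_assoc]

theorem length_letters_br (H K : LieExpr A) :
    H.letters.length + K.letters.length = (br H K).letters.length :=
  List.length_append.symm

theorem intervals_br (H K : LieExpr A) :
    (br H K).intervals 0 = ((0, H.size), (H.size, K.size)) :: (H.intervals 0 ++
      (K.intervals 0).map fun q => ((H.size + q.1.1, q.1.2), (H.size + q.2.1, q.2.2))) := by
  rw [intervals, Nat.zero_add, intervals_eq_map K]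

end LieExpr

section Glue

variable {α : Type*} [DecidableEq α] [Fintype α] {S : Finset α} {a b m : ℕ}

/-- Places `S` on the first `a` positions via `σ₁` and `Sᶜ` on the last `b` via `σ₂`. -/
def glue (hm : a + b = m) (σ₁ : {x // x ∈ S} ≃ Fin a) (σ₂ : {x // x ∈ Sᶜ} ≃ Fin b) :
    α ≃ Fin m :=
  (Equiv.sumCompl (· ∈ S)).symm.trans <|
    (σ₁.sumCongr ((Equiv.subtypeEquivRight fun _ => Finset.mem_compl.symm).trans σ₂)).trans <|
      finSumFinEquiv.trans (finCongr hm)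

variable (hm : a + b = m) (σ₁ : {x // x ∈ S} ≃ Fin a) (σ₂ : {x // x ∈ Sᶜ} ≃ Fin b)

theorem glue_apply_of_mem {v : α} (h : v ∈ S) :
    (glue hm σ₁ σ₂ v : ℕ) = σ₁ ⟨v, h⟩ := by
  simp [glue, Equiv.sumCompl_symm_apply_of_pos h]

theorem glue_apply_of_notMem {v : α} (h : v ∉ S) :
    (glue hm σ₁ σ₂ v : ℕ) = a + σ₂ ⟨v, Finset.mem_compl.2 h⟩ := by
  simp [glue, Equiv.sumCompl_symm_apply_of_neg h]
  rfl

theorem glue_injective :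
    Function.Injective fun p : ({x // x ∈ S} ≃ Fin a) × ({x // x ∈ Sᶜ} ≃ Fin b) =>
      glue hm p.1 p.2 := by
  rintro ⟨σ₁, σ₂⟩ ⟨τ₁, τ₂⟩ h
  have hval : ∀ v, (glue hm σ₁ σ₂ v : ℕ) = glue hm τ₁ τ₂ v := fun v =>
    congrArg (fun σ : α ≃ Fin m => (σ v : ℕ)) h
  refine Prod.ext (Equiv.ext fun ⟨v, hv⟩ => Fin.ext ?_)
    (Equiv.ext fun ⟨v, hv⟩ => Fin.ext ?_)
  · simpa only [glue_apply_of_mem _ _ _ hv] using hval v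
  · have hv' := Finset.mem_compl.1 hv
    simpa only [glue_apply_of_notMem _ _ _ hv', Nat.add_left_cancel_iff] using hval v

theorem exists_glue_eq (σ : α ≃ Fin m) (hσ : ∀ v, v ∈ S ↔ (σ v : ℕ) < a) :
    ∃ (σ₁ : {x // x ∈ S} ≃ Fin a) (σ₂ : {x // x ∈ Sᶜ} ≃ Fin b),
      glue hm σ₁ σ₂ = σ := by
  set τ := σ.trans ((finCongr hm).symm.trans finSumFinEquiv.symm)
  have hτ : ∀ v, ((finSumFinEquiv (τ v) : Fin (a + b)) : ℕ) = σ v := by simp [τ]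
  have hleft : ∀ v, v ∈ S ↔ (τ v).isLeft := by
    intro v
    rw [hσ, ← hτ]
    cases τ v <;> simp
  refine ⟨(τ.subtypeEquiv hleft).trans Equiv.sumIsLeft,
    (τ.subtypeEquiv fun v => ?_).trans Equiv.sumIsRight, Equiv.ext fun v => Fin.ext ?_⟩
  · rw [Finset.mem_compl, hleft, Sum.not_isLeft]
  · rw [← hτ]
    by_cases h : v ∈ S
    · obtain ⟨i, hi⟩ := Sum.isLeft_iff.1 ((hleft v).1 h)
      simp [glue_apply_of_mem _ _ _ h, hi]
    · obtain ⟨j, hj⟩ := Sum.isRight_iff.1 (Sum.not_isLeft.1 (mt (hleft v).2 h))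
      simp [glue_apply_of_notMem _ _ _ h, hj]

end Glue

namespace LGraph

variable {A : Type*} (G : LGraph A)

def Joins (P Q : Finset G.V) : Prop :=
  G.ConnOn P ∧ G.ConnOn Q ∧ (G.between P Q).card = 1

def IsSeparating (e : G.V × G.V) : Prop :=
  ¬ G.reach (G.edges.erase e) e.1 e.2 ∧
    ∀ v, G.reach (G.edges.erase e) e.1 v ∨ G.reach (G.edges.erase e) e.2 v

variable {G}

theorem between_comm (P Q : Finset G.V) : G.between P Q = G.between Q P := by
  simp only [between, or_comm]

theorem mem_between_compl {S : Finset G.V} {f : G.V × G.V} :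
    f ∈ G.between S Sᶜ ↔ f ∈ G.edges ∧ ¬(f.1 ∈ S ↔ f.2 ∈ S) := by
  simp only [between, Finset.mem_filter, Finset.mem_compl]
  tauto

theorem reach_symm {R : Finset (G.V × G.V)} {x y : G.V} (h : G.reach R x y) : G.reach R y x :=
  h.symm_of_symm fun _ _ hab => hab.symm

theorem mem_side {e : G.V × G.V} {x v : G.V} :
    v ∈ G.side e x ↔ G.reach (G.edges.erase e) x v := by
  simp [side]

theorem mem_side_iff_of_mem_erase {e f : G.V × G.V} (x : G.V) (hf : f ∈ G.edges.erase e) :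
    f.1 ∈ G.side e x ↔ f.2 ∈ G.side e x :=
  ⟨fun h => mem_side.2 ((mem_side.1 h).tail (.inl hf)),
    fun h => mem_side.2 ((mem_side.1 h).tail (.inr hf))⟩

theorem connOn_side (e : G.V × G.V) (x : G.V) : G.ConnOn (G.side e x) := by
  have hpath : ∀ v, G.reach (G.edges.erase e) x v →
      Relation.ReflTransGen (fun u w => u ∈ G.side e x ∧ w ∈ G.side e x ∧
        ((u, w) ∈ G.edges ∨ (w, u) ∈ G.edges)) x v := by
    intro v hv
    induction hv with
    | refl => exact .refl
    | tail hxc hcd ih =>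
      exact ih.tail ⟨mem_side.2 hxc, mem_side.2 (hxc.tail hcd),
        hcd.imp Finset.mem_of_mem_erase Finset.mem_of_mem_erase⟩
  refine ⟨⟨x, mem_side.2 .refl⟩, fun u hu v hv => ?_⟩
  exact ((hpath u (mem_side.1 hu)).symm_of_symm fun _ _ h => ⟨h.2.1, h.1, h.2.2.symm⟩).trans
    (hpath v (mem_side.1 hv))

theorem side_eq_of_between_compl {S : Finset G.V} {e : G.V × G.V} {w : G.V} (hS : G.ConnOn S)
    (hbet : G.between S Sᶜ = {e}) (hw : w ∈ S) : G.side e w = S := by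
  have hsame : ∀ f ∈ G.edges.erase e, f.1 ∈ S ↔ f.2 ∈ S := fun f hf => by
    by_contra hcross
    have : f ∈ G.between S Sᶜ := mem_between_compl.2 ⟨Finset.mem_of_mem_erase hf, hcross⟩
    exact Finset.ne_of_mem_erase hf (Finset.mem_singleton.1 (hbet ▸ this))
  have hcross : ¬(e.1 ∈ S ↔ e.2 ∈ S) :=
    (mem_between_compl.1 (hbet ▸ Finset.mem_singleton_self e)).2
  have hreach : ∀ v, G.reach (G.edges.erase e) w v → v ∈ S := by
    intro v hv
    induction hv with
    | refl => exact hw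
    | tail _ hcd ih => exact hcd.elim (fun h => (hsame _ h).1 ih) (fun h => (hsame _ h).2 ih)
  ext v
  refine ⟨fun hv => hreach v (mem_side.1 hv), fun hv => mem_side.2 ?_⟩
  refine Relation.ReflTransGen.mono ?_ _ _ (hS.2 w hw v hv)
  rintro u u' ⟨hu, hu', hadj⟩
  refine hadj.imp (fun h => Finset.mem_erase.2 ⟨?_, h⟩)
    (fun h => Finset.mem_erase.2 ⟨?_, h⟩)
  · rintro rfl; exact hcross (iff_of_true hu hu')
  · rintro rfl; exact hcross (iff_of_true hu' hu)

namespace IsSeparating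

variable {e : G.V × G.V}

theorem compl_side_fst (h : G.IsSeparating e) : (G.side e e.1)ᶜ = G.side e e.2 := by
  ext v
  rw [Finset.mem_compl, mem_side, mem_side]
  exact ⟨(h.2 v).resolve_left, fun h2 h1 => h.1 (h1.trans (reach_symm h2))⟩

theorem compl_side_snd (h : G.IsSeparating e) : (G.side e e.2)ᶜ = G.side e e.1 := by
  rw [← h.compl_side_fst, compl_compl]

theorem between_side_fst (h : G.IsSeparating e) (he : e ∈ G.edges) :
    G.between (G.side e e.1) (G.side e e.1)ᶜ = {e} := by
  ext f
  rw [mem_between_compl, Finset.mem_singleton]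
  refine ⟨fun ⟨hf, hcross⟩ => ?_, ?_⟩
  · by_contra hne
    exact hcross (mem_side_iff_of_mem_erase _ (Finset.mem_erase.2 ⟨hne, hf⟩))
  · rintro rfl
    exact ⟨he, fun hiff => h.1 (mem_side.1 (hiff.1 (mem_side.2 .refl)))⟩

theorem between_side_snd (h : G.IsSeparating e) (he : e ∈ G.edges) :
    G.between (G.side e e.2) (G.side e e.2)ᶜ = {e} := by
  rw [h.compl_side_snd, between_comm, ← h.compl_side_fst, h.between_side_fst he]

theorem side_fst_ne_side_snd (h : G.IsSeparating e) : G.side e e.1 ≠ G.side e e.2 :=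
  fun heq => h.1 (mem_side.1 (heq ▸ mem_side.2 .refl))

theorem fst_notMem_side_snd (h : G.IsSeparating e) : e.1 ∉ G.side e e.2 :=
  fun h1 => h.1 (reach_symm (mem_side.1 h1))

theorem between_compl_of_mem (h : G.IsSeparating e) (he : e ∈ G.edges) {X : Finset G.V}
    (hX : X ∈ ({G.side e e.1, G.side e e.2} : Finset (Finset G.V))) : G.between X Xᶜ = {e} := by
  rcases Finset.mem_insert.1 hX with rfl | hX
  · exact h.between_side_fst he
  · rw [Finset.mem_singleton.1 hX]
    exact h.between_side_snd he

end IsSeparating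

theorem pairwiseDisjoint_sides (hsep : ∀ e ∈ G.edges, G.IsSeparating e) :
    (G.edges : Set (G.V × G.V)).PairwiseDisjoint
      fun e => ({G.side e e.1, G.side e e.2} : Finset (Finset G.V)) := by
  intro e he e' he' hne
  refine Finset.disjoint_left.2 fun X hX hX' => hne (Finset.singleton_injective ?_)
  rw [← (hsep e he).between_compl_of_mem he hX, (hsep e' he').between_compl_of_mem he' hX']

section Induce

variable {S : Finset G.V}

variable (G S) in
def inclusion : (G.induce S).V ↪ G.V := Function.Embedding.subtype (· ∈ S)

theorem mem_edges_induce {a b : (G.induce S).V} :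
    (a, b) ∈ (G.induce S).edges ↔ (G.inclusion S a, G.inclusion S b) ∈ G.edges :=
  Finset.mem_filter.trans (and_iff_right (Finset.mem_univ _))

theorem connOn_map_inclusion {P : Finset (G.induce S).V} :
    G.ConnOn (P.map (G.inclusion S)) ↔ (G.induce S).ConnOn P := by
  unfold ConnOn
  rw [Finset.map_nonempty]
  simp only [Finset.forall_mem_map]
  refine and_congr_right fun _ => forall₂_congr fun x _ => forall₂_congr fun y _ => ?_
  rw [← Relation.reflTransGen_onFun_iff (G.inclusion S).injective]
  · simp only [Finset.mem_map', mem_edges_induce]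
  · rintro a b ⟨ha, -, -⟩
    obtain ⟨a', -, rfl⟩ := Finset.mem_map.1 ha
    exact ⟨a', rfl⟩

theorem between_map_inclusion (P Q : Finset (G.induce S).V) :
    G.between (P.map (G.inclusion S)) (Q.map (G.inclusion S)) =
      ((G.induce S).between P Q).map ((G.inclusion S).prodMap (G.inclusion S)) := by
  ext ⟨u, w⟩
  simp only [between, Finset.mem_filter, Finset.mem_map, Prod.exists,
    Function.Embedding.coe_prodMap, Prod.map_apply, Prod.mk.injEq, mem_edges_induce]
  aesop

theorem inclusion_ne_inclusion_compl (x : (G.induce S).V) (y : (G.induce Sᶜ).V) :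
    G.inclusion S x ≠ G.inclusion Sᶜ y := fun h => by
  have hx : G.inclusion S x ∈ S := x.2
  have hy : G.inclusion Sᶜ y ∉ S := Finset.mem_compl.1 y.2
  exact hy (h ▸ hx)

variable (S) in
theorem forall_iff_inclusion {p : G.V → Prop} :
    (∀ v, p v) ↔ (∀ x, p (G.inclusion S x)) ∧ ∀ y, p (G.inclusion Sᶜ y) := by
  refine ⟨fun h => ⟨fun x => h _, fun y => h _⟩, fun ⟨hS, hSc⟩ v => ?_⟩
  by_cases hv : v ∈ S
  · exact hS ⟨v, hv⟩
  · exact hSc ⟨v, Finset.mem_compl.2 hv⟩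

theorem joins_map_inclusion (P Q : Finset (G.induce S).V) :
    G.Joins (P.map (G.inclusion S)) (Q.map (G.inclusion S)) ↔ (G.induce S).Joins P Q := by
  rw [Joins, Joins, connOn_map_inclusion, connOn_map_inclusion, between_map_inclusion,
    Finset.card_map]

theorem sum_edges_induce {M : Type*} [AddCommMonoid M] (g : G.V × G.V → M) :
    ∑ f ∈ (G.induce S).edges, g (G.inclusion S f.1, G.inclusion S f.2) =
      ∑ f ∈ G.edges with f.1 ∈ S ∧ f.2 ∈ S, g f := by
  have hmap : (G.induce S).edges.map ((G.inclusion S).prodMap (G.inclusion S)) =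
      G.edges.filter fun f => f.1 ∈ S ∧ f.2 ∈ S := by
    ext ⟨u, w⟩
    simp only [Finset.mem_map, Finset.mem_filter, Prod.exists, Function.Embedding.coe_prodMap,
      Prod.map_apply, Prod.mk.injEq, mem_edges_induce]
    constructor
    · rintro ⟨a, b, he, rfl, rfl⟩
      exact ⟨he, a.2, b.2⟩
    · rintro ⟨he, hu, hw⟩
      exact ⟨⟨u, hu⟩, ⟨w, hw⟩, he, rfl, rfl⟩
  rw [← hmap, Finset.sum_map]
  rfl

variable (S) in
theorem sum_edges_eq_add {M : Type*} [AddCommMonoid M] (g : G.V × G.V → M) :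
    ∑ f ∈ G.edges, g f =
      ∑ f ∈ (G.induce S).edges, g (G.inclusion S f.1, G.inclusion S f.2) +
        ∑ f ∈ (G.induce Sᶜ).edges, g (G.inclusion Sᶜ f.1, G.inclusion Sᶜ f.2) +
        ∑ f ∈ G.between S Sᶜ, g f := by
  have hbet : G.between S Sᶜ = G.edges.filter fun f => ¬(f.1 ∈ S ↔ f.2 ∈ S) := by
    ext f
    rw [mem_between_compl, Finset.mem_filter]
  rw [sum_edges_induce, sum_edges_induce, hbet,
    ← Finset.sum_filter_add_sum_filter_not G.edges (fun f => f.1 ∈ S ↔ f.2 ∈ S),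
    ← Finset.sum_filter_add_sum_filter_not (G.edges.filter _) (fun f => f.1 ∈ S),
    Finset.filter_filter, Finset.filter_filter]
  congr 3 <;> ext f <;> simp only [Finset.mem_filter, Finset.mem_compl] <;> tauto

end Induce

end LGraph

section Pairing

variable {A : Type*} {G : LGraph A}

theorem good_iff_joins {L : LieExpr A} {σ : G.V ≃ Fin L.letters.length} :
    Good G L σ ↔
      ∀ q ∈ L.intervals 0, G.Joins (posSet G σ q.1.1 q.1.2) (posSet G σ q.2.1 q.2.2) :=
  Iff.rfl

theorem mem_posSet {m : ℕ} {σ : G.V ≃ Fin m} {st len : ℕ} {v : G.V} :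
    v ∈ posSet G σ st len ↔ st ≤ σ v ∧ (σ v : ℕ) < st + len := by
  simp [posSet]

theorem posSet_compl {a b m : ℕ} (hm : a + b = m) (σ : G.V ≃ Fin m) :
    (posSet G σ 0 a)ᶜ = posSet G σ a b := by
  ext v
  have := (σ v).isLt
  simp only [Finset.mem_compl, mem_posSet]
  omega

section GlueInduce

variable {S : Finset G.V} {a b m : ℕ} (hm : a + b = m) (σ₁ : (G.induce S).V ≃ Fin a)
  (σ₂ : (G.induce Sᶜ).V ≃ Fin b)

theorem glue_inclusion_fst (x : (G.induce S).V) :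
    (glue hm σ₁ σ₂ (G.inclusion S x) : ℕ) = σ₁ x :=
  glue_apply_of_mem hm σ₁ σ₂ x.2

theorem glue_inclusion_snd (y : (G.induce Sᶜ).V) :
    (glue hm σ₁ σ₂ (G.inclusion Sᶜ y) : ℕ) = a + σ₂ y :=
  glue_apply_of_notMem hm σ₁ σ₂ (Finset.mem_compl.1 y.2)

theorem posSet_glue_zero : posSet G (glue hm σ₁ σ₂) 0 a = S := by
  ext v
  rw [mem_posSet]
  by_cases h : v ∈ S
  · simp [glue_apply_of_mem hm σ₁ σ₂ h, h]
  · simp [glue_apply_of_notMem hm σ₁ σ₂ h, h]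

theorem posSet_glue_fst {st len : ℕ} (hst : st + len ≤ a) :
    posSet G (glue hm σ₁ σ₂) st len =
      (posSet (G.induce S) σ₁ st len).map (G.inclusion S) := by
  refine Finset.ext ((LGraph.forall_iff_inclusion S).2 ⟨fun x => ?_, fun y => ?_⟩)
  · rw [Finset.mem_map', mem_posSet, mem_posSet, glue_inclusion_fst]
  · have := (σ₂ y).isLt
    rw [mem_posSet, glue_inclusion_snd]
    refine iff_of_false (by omega) fun h => ?_
    obtain ⟨x, -, hx⟩ := Finset.mem_map.1 h
    exact LGraph.inclusion_ne_inclusion_compl x y hx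

theorem posSet_glue_snd {st len : ℕ} :
    posSet G (glue hm σ₁ σ₂) (a + st) len =
      (posSet (G.induce Sᶜ) σ₂ st len).map (G.inclusion Sᶜ) := by
  refine Finset.ext ((LGraph.forall_iff_inclusion S).2 ⟨fun x => ?_, fun y => ?_⟩)
  · rw [mem_posSet, glue_inclusion_fst]
    have := (σ₁ x).isLt
    refine iff_of_false (by omega) fun h => ?_
    obtain ⟨y, -, hy⟩ := Finset.mem_map.1 h
    exact LGraph.inclusion_ne_inclusion_compl x y hy.symm
  · rw [Finset.mem_map', mem_posSet, mem_posSet, glue_inclusion_snd]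
    omega

theorem card_descents_glue {e : G.V × G.V} (hbet : G.between S Sᶜ = {e}) :
    (G.edges.filter fun f => (glue hm σ₁ σ₂ f.2 : ℕ) < glue hm σ₁ σ₂ f.1).card =
      ((G.induce S).edges.filter fun f => (σ₁ f.2 : ℕ) < σ₁ f.1).card +
        ((G.induce Sᶜ).edges.filter fun f => (σ₂ f.2 : ℕ) < σ₂ f.1).card +
          if e.1 ∈ S then 0 else 1 := by
  have hcross : ¬(e.1 ∈ S ↔ e.2 ∈ S) :=
    (LGraph.mem_between_compl.1 (hbet ▸ Finset.mem_singleton_self e)).2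
  simp only [Finset.card_filter]
  rw [LGraph.sum_edges_eq_add S, hbet, Finset.sum_singleton]
  simp only [glue_inclusion_fst, glue_inclusion_snd, Nat.add_lt_add_iff_left]
  congr 1
  by_cases h : e.1 ∈ S
  · have h2 : e.2 ∉ S := fun h2 => hcross (iff_of_true h h2)
    have := (σ₁ ⟨e.1, h⟩).isLt
    rw [glue_apply_of_mem hm σ₁ σ₂ h, glue_apply_of_notMem hm σ₁ σ₂ h2, if_pos h,
      if_neg (by omega)]
  · have h2 : e.2 ∈ S := by tauto
    have := (σ₁ ⟨e.2, h2⟩).isLt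
    rw [glue_apply_of_mem hm σ₁ σ₂ h2, glue_apply_of_notMem hm σ₁ σ₂ h, if_neg h,
      if_pos (by omega)]

end GlueInduce

variable {S : Finset G.V} {H K : LieExpr A} (σ₁ : (G.induce S).V ≃ Fin H.letters.length)
  (σ₂ : (G.induce Sᶜ).V ≃ Fin K.letters.length)

theorem good_glue_iff (hS : G.Joins S Sᶜ) :
    Good G (.br H K) (glue (H.length_letters_br K) σ₁ σ₂) ↔
      Good (G.induce S) H σ₁ ∧ Good (G.induce Sᶜ) K σ₂ := by
  simp only [good_iff_joins, LieExpr.intervals_br, List.forall_mem_cons, List.forall_mem_append,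
    List.forall_mem_map, ← H.length_letters, ← K.length_letters]
  rw [← posSet_compl (H.length_letters_br K), posSet_glue_zero, and_iff_right hS]
  refine and_congr (forall₂_congr fun q hq => ?_) (forall₂_congr fun q _ => ?_)
  · have := H.length_letters ▸ H.intervals_le 0 q hq
    rw [posSet_glue_fst _ _ _ (by omega), posSet_glue_fst _ _ _ (by omega),
      LGraph.joins_map_inclusion]
  · rw [posSet_glue_snd, posSet_glue_snd, LGraph.joins_map_inclusion]

theorem glue_mem_bijections_iff :
    glue (H.length_letters_br K) σ₁ σ₂ ∈ Bijections G (.br H K) ↔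
      σ₁ ∈ Bijections (G.induce S) H ∧ σ₂ ∈ Bijections (G.induce Sᶜ) K := by
  simp only [Bijections, Finset.mem_filter, Finset.mem_univ, true_and]
  rw [LGraph.forall_iff_inclusion S]
  refine and_congr (forall_congr' fun x => ?_) (forall_congr' fun y => ?_)
  · have hget : (LieExpr.br H K).letters.get
        (glue (H.length_letters_br K) σ₁ σ₂ (G.inclusion S x)) = H.letters.get (σ₁ x) := by
      simp only [List.get_eq_getElem, glue_inclusion_fst]
      exact List.getElem_append_left _
    rw [hget]
    rfl
  · have hget : (LieExpr.br H K).letters.get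
        (glue (H.length_letters_br K) σ₁ σ₂ (G.inclusion Sᶜ y)) =
          K.letters.get (σ₂ y) := by
      simp only [List.get_eq_getElem, glue_inclusion_snd]
      exact List.getElem_append_right (Nat.le_add_right _ _) |>.trans (by simp)
    rw [hget]
    rfl

theorem pairingAt_glue {e : G.V × G.V} (hbet : G.between S Sᶜ = {e}) (hS : G.ConnOn S)
    (hSc : G.ConnOn Sᶜ) :
    pairingAt G (.br H K) (glue (H.length_letters_br K) σ₁ σ₂) =
      (if e.1 ∈ S then 1 else -1) *
        (pairingAt (G.induce S) H σ₁ * pairingAt (G.induce Sᶜ) K σ₂) := by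
  have hjoins : G.Joins S Sᶜ := ⟨hS, hSc, by rw [hbet, Finset.card_singleton]⟩
  unfold pairingAt
  rw [good_glue_iff σ₁ σ₂ hjoins, card_descents_glue _ σ₁ σ₂ hbet, pow_add, pow_add]
  split_ifs <;> simp_all

theorem sum_pairingAt_posSet_eq {e : G.V × G.V} (hbet : G.between S Sᶜ = {e})
    (hS : G.ConnOn S) (hSc : G.ConnOn Sᶜ) :
    ∑ σ ∈ Bijections G (.br H K) with posSet G σ 0 H.size = S, pairingAt G (.br H K) σ =
      (if e.1 ∈ S then 1 else -1) * (pairing (G.induce S) H * pairing (G.induce Sᶜ) K) := by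
  rw [pairing, pairing, Finset.sum_mul_sum, ← Finset.sum_product', Finset.mul_sum]
  symm
  refine Finset.sum_bij (fun p _ => glue (H.length_letters_br K) p.1 p.2) ?_ ?_ ?_ ?_
  · rintro ⟨σ₁, σ₂⟩ hp
    rw [Finset.mem_filter, glue_mem_bijections_iff, ← H.length_letters, posSet_glue_zero]
    exact ⟨Finset.mem_product.1 hp, rfl⟩
  · rintro p - q - h
    exact glue_injective _ h
  · intro σ hσ
    rw [Finset.mem_filter] at hσ
    have hσS : ∀ v, v ∈ S ↔ (σ v : ℕ) < H.letters.length := fun v => by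
      rw [← hσ.2, mem_posSet, H.length_letters]
      simp
    obtain ⟨σ₁, σ₂, hglue⟩ := exists_glue_eq (H.length_letters_br K) σ hσS
    have hmem := (glue_mem_bijections_iff σ₁ σ₂).1 (hglue ▸ hσ.1)
    exact ⟨(σ₁, σ₂), Finset.mem_product.2 hmem, hglue⟩
  · rintro ⟨σ₁, σ₂⟩ -
    exact (pairingAt_glue σ₁ σ₂ hbet hS hSc).symm

theorem exists_side_of_pairingAt_ne_zero {σ : G.V ≃ Fin (LieExpr.br H K).letters.length}
    (hσ : pairingAt G (.br H K) σ ≠ 0) :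
    ∃ e ∈ G.edges,
      posSet G σ 0 H.size ∈ ({G.side e e.1, G.side e e.2} : Finset (Finset G.V)) := by
  have hgood : Good G (.br H K) σ := by
    by_contra h
    exact hσ (if_neg h)
  rw [good_iff_joins, LieExpr.intervals_br, List.forall_mem_cons] at hgood
  obtain ⟨⟨hconn, -, hcard⟩, -⟩ := hgood
  rw [← posSet_compl (LieExpr.length_letters (.br H K)).symm] at hcard
  obtain ⟨e, he⟩ := Finset.card_eq_one.1 hcard
  obtain ⟨heG, hcross⟩ := LGraph.mem_between_compl.1 (he ▸ Finset.mem_singleton_self e)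
  refine ⟨e, heG, ?_⟩
  by_cases h1 : e.1 ∈ posSet G σ 0 H.size
  · exact Finset.mem_insert.2 (Or.inl (LGraph.side_eq_of_between_compl hconn he h1).symm)
  · have h2 : e.2 ∈ posSet G σ 0 H.size := by tauto
    exact Finset.mem_insert_of_mem
      (Finset.mem_singleton.2 (LGraph.side_eq_of_between_compl hconn he h2).symm)

end Pairing

/-- **Bracketing Lie expressions is dual to cutting graphs**: if `G` is a finite directed
labeled graph in which every edge is separating (removing any edge `e` disconnects its two
endpoints' components, which together cover the whole graph — e.g. `G` a tree), then for Lie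
bracket expressions `H`, `K` we have
`⟨G, [H,K]⟩ = Σ_e (⟨G₁ᵉ,H⟩·⟨G₂ᵉ,K⟩ − ⟨G₁ᵉ,K⟩·⟨G₂ᵉ,H⟩)`, the sum being over all edges of
`G`, where `G₁ᵉ` and `G₂ᵉ` are the two subgraphs obtained by removing `e`, ordered so that
`e` pointed from `G₁ᵉ` to `G₂ᵉ` in `G`. -/
theorem pairing_br_eq_sum_cuts {A : Type*} (G : LGraph A)
    (hsep : ∀ e ∈ G.edges,
      ¬ G.reach (G.edges.erase e) e.1 e.2 ∧
      ∀ v : G.V, G.reach (G.edges.erase e) e.1 v ∨ G.reach (G.edges.erase e) e.2 v)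
    (H K : LieExpr A) :
    pairing G (.br H K) =
      ∑ e ∈ G.edges,
        (pairing (G.induce (G.side e e.1)) H * pairing (G.induce (G.side e e.2)) K -
          pairing (G.induce (G.side e e.1)) K * pairing (G.induce (G.side e e.2)) H) := by
  have hcut : ∀ σ ∈ Bijections G (.br H K), pairingAt G (.br H K) σ ≠ 0 →
      posSet G σ 0 H.size ∈ G.edges.biUnion fun e => {G.side e e.1, G.side e e.2} :=
    fun σ _ hσ => Finset.mem_biUnion.2 (exists_side_of_pairingAt_ne_zero hσ)
  rw [pairing, ← Finset.sum_filter_of_ne hcut, ← Finset.sum_fiberwise_eq_sum_filter,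
    Finset.sum_biUnion (LGraph.pairwiseDisjoint_sides hsep)]
  refine Finset.sum_congr rfl fun e he => ?_
  have h : G.IsSeparating e := hsep e he
  have hconn₁ : G.ConnOn (G.side e e.1)ᶜ := h.compl_side_fst ▸ G.connOn_side e e.2
  have hconn₂ : G.ConnOn (G.side e e.2)ᶜ := h.compl_side_snd ▸ G.connOn_side e e.1
  rw [Finset.sum_pair h.side_fst_ne_side_snd,
    sum_pairingAt_posSet_eq (h.between_side_fst he) (G.connOn_side e e.1) hconn₁,
    sum_pairingAt_posSet_eq (h.between_side_snd he) (G.connOn_side e e.2) hconn₂,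
    h.compl_side_fst, h.compl_side_snd, if_pos (LGraph.mem_side.2 .refl),
    if_neg h.fst_notMem_side_snd]
  ring
end
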